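/- arXiv:1910.06378 — 4 statements merged into one kernel-verified Lean document; each statement's English description precedes it below -/
import Mathlib

section
/- Let h : R^d → R be β-smooth (gradient β-Lipschitz) and μ-strongly convex with 0 ≤ μ ≤ β. Then for all x, y, z in R^d: ⟨∇h(x), z − y⟩ ≥ h(z) − h(y) + (μ/4)‖y − z‖² − β‖z − x‖². -/
open scoped RealInnerProductSpace

/-- Perturbed strong convexity: for a `β`-smooth, `μ`-strongly convex `h : ℝ^d → ℝ`
with `0 ≤ μ ≤ β`, and any `x, y, z`:
`⟪∇h(x), z − y⟫ ≥ h(z) − h(y) + (μ/4)‖y − z‖² − β‖z − x‖²`. -/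
theorem perturbed_strong_convexity {d : ℕ}
    (h : EuclideanSpace ℝ (Fin d) → ℝ) (h' : EuclideanSpace ℝ (Fin d) → EuclideanSpace ℝ (Fin d))
    (β μ : ℝ) (hμ : 0 ≤ μ) (hβ : μ ≤ β)
    (hgrad : ∀ x, HasGradientAt h (h' x) x)
    (hsmooth : ∀ x y, ‖h' x - h' y‖ ≤ β * ‖x - y‖)
    (hsc : ∀ x y, h y ≥ h x + ⟪h' x, y - x⟫ + μ / 2 * ‖y - x‖ ^ 2)
    (x y z : EuclideanSpace ℝ (Fin d)) :
    ⟪h' x, z - y⟫ ≥ h z - h y + μ / 4 * ‖y - z‖ ^ 2 - β * ‖z - x‖ ^ 2 := by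
  have A := hsc x y
  have B := hsc z x
  -- Cauchy-Schwarz + Lipschitz
  have hCS : ⟪h' x - h' z, z - x⟫ ≥ -(β * ‖z - x‖ ^ 2) := by
    have h1 : |⟪h' x - h' z, z - x⟫| ≤ ‖h' x - h' z‖ * ‖z - x‖ := abs_real_inner_le_norm _ _
    have h2 : ‖h' x - h' z‖ ≤ β * ‖x - z‖ := hsmooth x z
    have h3 : ‖x - z‖ = ‖z - x‖ := norm_sub_rev _ _
    have h4 : ‖h' x - h' z‖ * ‖z - x‖ ≤ β * ‖z - x‖ ^ 2 := by
      rw [h3] at h2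
      nlinarith [norm_nonneg (z - x)]
    nlinarith [abs_nonneg ⟪h' x - h' z, z - x⟫, neg_abs_le ⟪h' x - h' z, z - x⟫]
  -- triangle inequality squared
  have hT : ‖y - z‖ ^ 2 ≤ 2 * ‖y - x‖ ^ 2 + 2 * ‖x - z‖ ^ 2 := by
    have := norm_add_le (y - x) (x - z)
    have he : y - z = (y - x) + (x - z) := by abel
    rw [he]
    nlinarith [this, norm_nonneg (y - x + (x - z)), norm_nonneg (y - x), norm_nonneg (x - z), sq_nonneg (‖y - x‖ - ‖x - z‖), mul_self_le_mul_self (norm_nonneg (y - x + (x - z))) this]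
  -- inner product identities
  have hid : ⟪h' x, z - y⟫ =
      -⟪h' x, y - x⟫ - ⟪h' z, x - z⟫ + ⟪h' x - h' z, z - x⟫ := by
    simp only [inner_sub_left, inner_sub_right]
    ring
  nlinarith [norm_nonneg (x - z), sq_nonneg (‖x - z‖)]
end

section
/- Suppose f_1, ..., f_N : R^d → R are convex and β-smooth, f = (1/N)∑ f_i, and x⋆ is a minimizer of f. Then for all x: (1/N)∑_{i=1}^N ‖∇f_i(x)‖² ≤ (2/N)∑_{i=1}^N ‖∇f_i(x⋆)‖² + 4β(f(x) − f(x⋆)). -/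
/-! For a convex function `g` with `β`-Lipschitz gradient, comparing the convexity lower bound
at `y` with the quadratic upper bound at `x`, both taken at the point `x - β⁻¹ (∇g(x) - ∇g(y))`,
gives co-coercivity: `‖∇g(x) - ∇g(y)‖² ≤ 2β (g(x) - g(y) - ⟪∇g(y), x - y⟫)`. Together with
`‖a‖² ≤ 2‖a - b‖² + 2‖b‖²` this bounds each `‖∇fᵢ(x)‖²`; averaging over `i`, the linear terms add
up to `⟪∇f(x⋆), x - x⋆⟫`, which vanishes because `x⋆` minimizes `f`. -/

open scoped RealInnerProductSpace

open Finset InnerProductSpace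

variable {E : Type*} [NormedAddCommGroup E] [InnerProductSpace ℝ E] [CompleteSpace E]

theorem HasGradientAt.sum {ι : Type*} (u : Finset ι) {f : ι → E → ℝ} {f' : ι → E} {x : E}
    (h : ∀ i ∈ u, HasGradientAt (f i) (f' i) x) :
    HasGradientAt (fun y => ∑ i ∈ u, f i y) (∑ i ∈ u, f' i) x := by
  rw [hasGradientAt_iff_hasFDerivAt, map_sum]
  exact HasFDerivAt.fun_sum fun i hi => (h i hi).hasFDerivAt

theorem HasGradientAt.const_mul {f : E → ℝ} {f' x : E} (c : ℝ) (h : HasGradientAt f f' x) :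
    HasGradientAt (fun y => c * f y) (c • f') x := by
  rw [hasGradientAt_iff_hasFDerivAt, map_smul]
  exact h.hasFDerivAt.const_mul c

theorem IsLocalMin.hasGradientAt_eq_zero {f : E → ℝ} {f' a : E} (h : IsLocalMin f a)
    (hf : HasGradientAt f f' a) : f' = 0 :=
  (toDual ℝ E).map_eq_zero_iff.mp (h.hasFDerivAt_eq_zero hf.hasFDerivAt)

theorem HasGradientAt.hasDerivAt_comp_add_smul {g : E → ℝ} {g' x v : E} {t : ℝ}
    (h : HasGradientAt g g' (x + t • v)) :
    HasDerivAt (fun s : ℝ => g (x + s • v)) ⟪g', v⟫ t := by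
  have hline : HasDerivAt (fun s : ℝ => x + s • v) v t := by
    simpa using ((hasDerivAt_id t).smul_const v).const_add x
  exact h.hasFDerivAt.comp_hasDerivAt t hline

theorem le_add_inner_add_sq_of_lipschitz_gradient {g : E → ℝ} {g' : E → E} {β : ℝ}
    (hgrad : ∀ z, HasGradientAt g (g' z) z)
    (hsmooth : ∀ z w, ‖g' z - g' w‖ ≤ β * ‖z - w‖) (x v : E) :
    g (x + v) ≤ g x + ⟪g' x, v⟫ + β / 2 * ‖v‖ ^ 2 := by
  set φ : ℝ → ℝ := fun t => g (x + t • v) - t * ⟪g' x, v⟫ - β / 2 * t ^ 2 * ‖v‖ ^ 2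
  set φ' : ℝ → ℝ := fun t => ⟪g' (x + t • v) - g' x, v⟫ - β * t * ‖v‖ ^ 2
  have hφ : ∀ t, HasDerivAt φ (φ' t) t := by
    intro t
    have hquad : HasDerivAt (fun t : ℝ => β / 2 * t ^ 2 * ‖v‖ ^ 2) (β * t * ‖v‖ ^ 2) t :=
      (((hasDerivAt_pow 2 t).const_mul (β / 2)).mul_const (‖v‖ ^ 2)).congr_deriv (by ring)
    exact ((((hgrad _).hasDerivAt_comp_add_smul).sub
      ((hasDerivAt_id' t).mul_const ⟪g' x, v⟫)).sub hquad).congr_deriv (by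
        simp only [φ', inner_sub_left, one_mul])
  have hφ'_nonpos : ∀ t ∈ interior (Set.Ici (0 : ℝ)), φ' t ≤ 0 := by
    intro t ht
    rw [interior_Ici, Set.mem_Ioi] at ht
    have hlip : ‖g' (x + t • v) - g' x‖ ≤ β * (t * ‖v‖) := by
      simpa [norm_smul, abs_of_pos ht] using hsmooth (x + t • v) x
    have := (real_inner_le_norm _ v).trans (mul_le_mul_of_nonneg_right hlip (norm_nonneg v))
    simp only [φ']
    nlinarith
  have hanti : AntitoneOn φ (Set.Ici 0) :=
    antitoneOn_of_hasDerivWithinAt_nonpos (convex_Ici 0)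
      (fun t _ => (hφ t).continuousAt.continuousWithinAt)
      (fun t _ => (hφ t).hasDerivWithinAt) hφ'_nonpos
  have h10 : φ 1 ≤ φ 0 := hanti Set.self_mem_Ici (Set.mem_Ici.mpr zero_le_one) zero_le_one
  simp only [φ, zero_smul, one_smul, add_zero] at h10
  linarith

theorem sq_norm_sub_le_of_convex_of_lipschitz_gradient {g : E → ℝ} {g' : E → E} {β : ℝ}
    (hβ : 0 < β) (hgrad : ∀ z, HasGradientAt g (g' z) z)
    (hsmooth : ∀ z w, ‖g' z - g' w‖ ≤ β * ‖z - w‖) (x y : E)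
    (hconvex : ∀ w, g y + ⟪g' y, w - y⟫ ≤ g w) :
    ‖g' x - g' y‖ ^ 2 ≤ 2 * β * (g x - g y - ⟪g' y, x - y⟫) := by
  set δ := g' x - g' y
  have hup := le_add_inner_add_sq_of_lipschitz_gradient hgrad hsmooth x (-(β⁻¹ • δ))
  have hlow := hconvex (x - β⁻¹ • δ)
  have hδ : ⟪g' x, δ⟫ - ⟪g' y, δ⟫ = ‖δ‖ ^ 2 := by
    rw [← inner_sub_left, real_inner_self_eq_norm_sq]
  rw [← sub_eq_add_neg] at hup
  rw [sub_right_comm] at hlow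
  simp only [inner_neg_right, inner_smul_right, inner_sub_right, norm_neg, norm_smul,
    Real.norm_eq_abs, abs_inv, abs_of_pos hβ] at hup hlow
  have hquad : β / 2 * (β⁻¹ * ‖δ‖) ^ 2 = β⁻¹ * ‖δ‖ ^ 2 / 2 := by field_simp
  have key : β⁻¹ * ‖δ‖ ^ 2 / 2 ≤ g x - g y - ⟪g' y, x - y⟫ := by
    rw [inner_sub_right]
    linear_combination hlow.trans hup - β⁻¹ * hδ + hquad
  calc ‖δ‖ ^ 2 = 2 * β * (β⁻¹ * ‖δ‖ ^ 2 / 2) := by field_simp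
    _ ≤ 2 * β * (g x - g y - ⟪g' y, x - y⟫) := by gcongr

theorem sq_norm_le_of_convex_of_lipschitz_gradient {g : E → ℝ} {g' : E → E} {β : ℝ}
    (hβ : 0 < β) (hgrad : ∀ z, HasGradientAt g (g' z) z)
    (hsmooth : ∀ z w, ‖g' z - g' w‖ ≤ β * ‖z - w‖) (x y : E)
    (hconvex : ∀ w, g y + ⟪g' y, w - y⟫ ≤ g w) :
    ‖g' x‖ ^ 2 ≤ 2 * ‖g' y‖ ^ 2 + 4 * β * (g x - g y - ⟪g' y, x - y⟫) := by
  have hpar : ‖g' x‖ ^ 2 ≤ 2 * ‖g' x - g' y‖ ^ 2 + 2 * ‖g' y‖ ^ 2 := by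
    have := parallelogram_law_with_norm ℝ (g' x - g' y) (g' y)
    rw [sub_add_cancel] at this
    nlinarith [sq_nonneg ‖g' x - g' y - g' y‖]
  linarith [sq_norm_sub_le_of_convex_of_lipschitz_gradient hβ hgrad hsmooth x y hconvex]

/-- Convex smooth functions automatically satisfy bounded gradient dissimilarity with
`B² = 2`: if `f_i` are convex and `β`-smooth, `f = (1/N)∑ f_i`, and `x⋆` minimizes `f`, then
`(1/N)∑ ‖∇f_i(x)‖² ≤ (2/N)∑ ‖∇f_i(x⋆)‖² + 4β (f(x) − f(x⋆))`. -/
theorem bgd_of_convex_smooth {d N : ℕ}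
    (f : Fin N → EuclideanSpace ℝ (Fin d) → ℝ)
    (f' : Fin N → EuclideanSpace ℝ (Fin d) → EuclideanSpace ℝ (Fin d))
    (β : ℝ) (hβ : 0 < β)
    (hgrad : ∀ i x, HasGradientAt (f i) (f' i x) x)
    (hconvex : ∀ i x y, f i y ≥ f i x + ⟪f' i x, y - x⟫)
    (hsmooth : ∀ i x y, ‖f' i x - f' i y‖ ≤ β * ‖x - y‖)
    (xstar : EuclideanSpace ℝ (Fin d))
    (hmin : ∀ y, (1 / (N : ℝ)) * ∑ i, f i xstar ≤ (1 / (N : ℝ)) * ∑ i, f i y)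
    (x : EuclideanSpace ℝ (Fin d)) :
    (1 / (N : ℝ)) * ∑ i, ‖f' i x‖ ^ 2 ≤
      (2 / (N : ℝ)) * ∑ i, ‖f' i xstar‖ ^ 2 +
        4 * β * ((1 / (N : ℝ)) * ∑ i, f i x - (1 / (N : ℝ)) * ∑ i, f i xstar) := by
  have hF : HasGradientAt (fun y => (1 / (N : ℝ)) * ∑ i, f i y)
      ((1 / (N : ℝ)) • ∑ i, f' i xstar) xstar :=
    (HasGradientAt.sum _ fun i _ => hgrad i xstar).const_mul _
  have hcrit : (1 / (N : ℝ)) • ∑ i, f' i xstar = 0 :=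
    ((isMinOn_univ_iff.mpr hmin).isLocalMin Filter.univ_mem).hasGradientAt_eq_zero hF
  calc (1 / (N : ℝ)) * ∑ i, ‖f' i x‖ ^ 2
      ≤ (1 / (N : ℝ)) * ∑ i, (2 * ‖f' i xstar‖ ^ 2 +
          4 * β * (f i x - f i xstar - ⟪f' i xstar, x - xstar⟫)) := by
        gcongr with i
        exact sq_norm_le_of_convex_of_lipschitz_gradient hβ (hgrad i) (hsmooth i) x xstar
          (hconvex i xstar)
    _ = (2 / (N : ℝ)) * ∑ i, ‖f' i xstar‖ ^ 2 +
          4 * β * ((1 / (N : ℝ)) * ∑ i, f i x - (1 / (N : ℝ)) * ∑ i, f i xstar) -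
          4 * β * ⟪(1 / (N : ℝ)) • ∑ i, f' i xstar, x - xstar⟫ := by
        simp only [sum_add_distrib, sum_sub_distrib, ← mul_sum, sum_inner, real_inner_smul_left]
        ring
    _ = _ := by rw [hcrit, inner_zero_left, mul_zero, sub_zero]
end

section
/- Let μ, G > 0 and define f_1(x) = μx² + Gx and f_2(x) = −Gx on R, with f = (f_1 + f_2)/2 = (μ/2)x². Then f is μ-strongly convex, and f_1, f_2 satisfy the (G, B)-bounded gradient dissimilarity condition (1/2)(‖f_1'(x)‖² + ‖f_2'(x)‖²) ≤ G'² + B²‖f'(x)‖² with B = 3 and G' = √2·G. -/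
/-- The lower-bound construction: `f₁(x) = μx² + Gx`, `f₂(x) = −Gx`,
`f = (f₁ + f₂)/2 = (μ/2)x²`. Then `f` is `μ`-strongly convex (with `f'(x) = μx`) and
`f₁, f₂` satisfy `(G', B)`-bounded gradient dissimilarity with `B = 3`, `G' = √2 G`:
`(1/2)(‖f₁'(x)‖² + ‖f₂'(x)‖²) ≤ G'² + B² ‖f'(x)‖²`. -/
theorem lower_bound_construction (μ G : ℝ) (hμ : 0 < μ) (hG : 0 < G) :
    (∀ x y : ℝ,
        (fun z : ℝ => ((μ * z ^ 2 + G * z) + (-(G * z))) / 2) y ≥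
          (fun z : ℝ => ((μ * z ^ 2 + G * z) + (-(G * z))) / 2) x
            + (μ * x) * (y - x) + μ / 2 * (y - x) ^ 2) ∧
    (∀ x : ℝ,
        (1 / 2) * (‖2 * μ * x + G‖ ^ 2 + ‖-G‖ ^ 2) ≤
          (Real.sqrt 2 * G) ^ 2 + (3 : ℝ) ^ 2 * ‖μ * x‖ ^ 2) := by
  constructor
  · intro x y
    simp only
    nlinarith [sq_nonneg (y - x)]
  · intro x
    have h2 : (Real.sqrt 2) ^ 2 = 2 := Real.sq_sqrt (by norm_num)
    simp only [Real.norm_eq_abs, sq_abs, mul_pow, h2]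
    nlinarith [sq_nonneg (G - 2 * μ * x), sq_nonneg (μ * x)]
end

section
/- Let A, A_1, ..., A_N be symmetric d×d matrices with A = (1/N)∑A_i, ‖A_i − A‖ ≤ δ, ‖A‖ ≤ β, and 0 < η ≤ min(1/(21δK), 1/β) for integer K ≥ 1. Consider the deterministic recursion y_k = y_{k−1} − η(A_i(y_{k−1} − x⋆) + (A − A_i)(x − x⋆)) started at y_0 = x. Then for each k ≤ K: ‖y_k − x‖² ≤ (1 + 1/(2K))‖y_{k−1} − x‖² + 7Kη²‖A(y_{k−1} − x⋆)‖². -/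
/-!
Writing `z = y_{k-1} - x` and `B = A_i - A`, one step of the recursion reads
`y_k - x = (z - η B z) - η A (y_{k-1} - x⋆)`. The relaxed triangle inequality with weights
`7K / (7K - 1)` and `7K` separates the two terms, `‖z - η B z‖ ≤ (1 + ηδ) ‖z‖`, and the step-size
condition `ηδK ≤ 1/21` makes `7K / (7K - 1) · (1 + ηδ)²` at most `1 + 1/(2K)`.
-/

theorem norm_sub_sq_le_weighted {E : Type*} [SeminormedAddCommGroup E] {c : ℝ} (hc : 0 < c)
    (u v : E) : ‖u - v‖ ^ 2 ≤ (1 + c⁻¹) * ‖u‖ ^ 2 + (1 + c) * ‖v‖ ^ 2 := by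
  have hcc : c * c⁻¹ = 1 := mul_inv_cancel₀ hc.ne'
  have hinv : 0 < c⁻¹ := inv_pos.mpr hc
  calc ‖u - v‖ ^ 2 ≤ (‖u‖ + ‖v‖) ^ 2 := by gcongr; exact norm_sub_le u v
    _ ≤ (1 + c⁻¹) * ‖u‖ ^ 2 + (1 + c) * ‖v‖ ^ 2 := by
      -- the gap is `c⁻¹ (‖u‖ - c ‖v‖)²`
      nlinarith [mul_nonneg hinv.le (sq_nonneg (‖u‖ - c * ‖v‖))]

theorem norm_sub_smul_apply_le {E : Type*} [SeminormedAddCommGroup E] [NormedSpace ℝ E]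
    (B : E →L[ℝ] E) {δ η : ℝ} (hB : ‖B‖ ≤ δ) (hη : 0 ≤ η) (z : E) :
    ‖z - η • B z‖ ≤ (1 + η * δ) * ‖z‖ :=
  calc ‖z - η • B z‖ ≤ ‖z‖ + η * ‖B z‖ := by
        simpa only [norm_smul, Real.norm_of_nonneg hη] using norm_sub_le z (η • B z)
    _ ≤ ‖z‖ + η * (δ * ‖z‖) := by gcongr; exact B.le_of_opNorm_le hB z
    _ = (1 + η * δ) * ‖z‖ := by ring

theorem one_add_inv_mul_one_add_sq_le {K e : ℝ} (hK : 1 ≤ K) (he : 0 ≤ e) (heK : e * K ≤ 1 / 21) :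
    (1 + (7 * K - 1)⁻¹) * (1 + e) ^ 2 ≤ 1 + 1 / (2 * K) := by
  have h7K : 0 < 7 * K - 1 := by linarith
  have hlhs : 1 + (7 * K - 1)⁻¹ = 7 * K / (7 * K - 1) := by field_simp; ring
  have hrhs : 1 + 1 / (2 * K) = (2 * K + 1) / (2 * K) := by field_simp
  rw [hlhs, hrhs, div_mul_eq_mul_div, div_le_div_iff₀ h7K (by positivity)]
  nlinarith [mul_le_mul_of_nonneg_left heK (by positivity : (0 : ℝ) ≤ 28 * K),
    mul_self_le_mul_self (mul_nonneg he (by positivity : (0 : ℝ) ≤ K)) heK]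

theorem scaffold_drift_bound_quadratic_general {d N : ℕ}
    (A : Fin N → EuclideanSpace ℝ (Fin d) →L[ℝ] EuclideanSpace ℝ (Fin d))
    (Abar : EuclideanSpace ℝ (Fin d) →L[ℝ] EuclideanSpace ℝ (Fin d))
    (δ β : ℝ) (hδ : 0 < δ)
    (hdiss : ∀ i, ‖A i - Abar‖ ≤ δ)
    (K : ℕ) (hK : 1 ≤ K)
    (η : ℝ) (hη0 : 0 < η) (hη : η ≤ min (1 / (21 * δ * (K : ℝ))) (1 / β))
    (i : Fin N) (x xstar : EuclideanSpace ℝ (Fin d))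
    (y : ℕ → EuclideanSpace ℝ (Fin d))
    (hrec : ∀ k, y (k + 1) = y k - η • ((A i) (y k - xstar) + (Abar - A i) (x - xstar))) :
    ∀ k, 1 ≤ k → k ≤ K →
      ‖y k - x‖ ^ 2 ≤ (1 + 1 / (2 * (K : ℝ))) * ‖y (k - 1) - x‖ ^ 2
        + 7 * (K : ℝ) * η ^ 2 * ‖Abar (y (k - 1) - xstar)‖ ^ 2 := by
  rintro _ hk -
  obtain ⟨m, rfl⟩ := Nat.exists_eq_add_of_le' hk
  rw [Nat.add_sub_cancel]
  set z := y m - x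
  set w := Abar (y m - xstar)
  have hKr : (1 : ℝ) ≤ K := by exact_mod_cast hK
  have hstep : y (m + 1) - x = (z - η • (A i - Abar) z) - η • w := by
    simp only [hrec m, z, w, sub_apply, map_sub, smul_sub, smul_add]
    abel
  have hηδK : η * δ * K ≤ 1 / 21 := by
    have := (le_div_iff₀ (by positivity)).mp (hη.trans (min_le_left _ _))
    linarith
  calc ‖y (m + 1) - x‖ ^ 2
      ≤ (1 + (7 * (K : ℝ) - 1)⁻¹) * ‖z - η • (A i - Abar) z‖ ^ 2
          + (1 + (7 * K - 1)) * ‖η • w‖ ^ 2 := hstep ▸ norm_sub_sq_le_weighted (by linarith) _ _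
    _ = (1 + (7 * (K : ℝ) - 1)⁻¹) * ‖z - η • (A i - Abar) z‖ ^ 2
          + 7 * K * η ^ 2 * ‖w‖ ^ 2 := by
      rw [norm_smul, Real.norm_of_nonneg hη0.le]; ring
    _ ≤ (1 + (7 * (K : ℝ) - 1)⁻¹) * ((1 + η * δ) * ‖z‖) ^ 2 + 7 * K * η ^ 2 * ‖w‖ ^ 2 := by
      have : 0 < 7 * (K : ℝ) - 1 := by linarith
      gcongr
      exact norm_sub_smul_apply_le _ (hdiss i) hη0.le z
    _ ≤ (1 + 1 / (2 * (K : ℝ))) * ‖z‖ ^ 2 + 7 * K * η ^ 2 * ‖w‖ ^ 2 := by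
      rw [mul_pow, ← mul_assoc]
      gcongr
      exact one_add_inv_mul_one_add_sq_le hKr (by positivity) hηδK

/-- Noiseless client-drift bound for SCAFFOLD on quadratics: for symmetric operators
`A i` with mean `A`, `‖A i − A‖ ≤ δ`, `‖A‖ ≤ β`, step-size
`0 < η ≤ min(1/(21δK), 1/β)`, the recursion
`y_k = y_{k−1} − η(A_i(y_{k−1} − x⋆) + (A − A_i)(x − x⋆))`, `y_0 = x`, satisfies
`‖y_k − x‖² ≤ (1 + 1/(2K))‖y_{k−1} − x‖² + 7Kη²‖A(y_{k−1} − x⋆)‖²`. -/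
theorem scaffold_drift_bound_quadratic {d N : ℕ}
    (A : Fin N → EuclideanSpace ℝ (Fin d) →L[ℝ] EuclideanSpace ℝ (Fin d))
    (hsym : ∀ i, IsSelfAdjoint (A i))
    (Abar : EuclideanSpace ℝ (Fin d) →L[ℝ] EuclideanSpace ℝ (Fin d))
    (hAbar : Abar = (N : ℝ)⁻¹ • ∑ i, A i)
    (δ β : ℝ) (hδ : 0 < δ) (hβ : 0 < β)
    (hdiss : ∀ i, ‖A i - Abar‖ ≤ δ) (hAnorm : ‖Abar‖ ≤ β)
    (K : ℕ) (hK : 1 ≤ K)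
    (η : ℝ) (hη0 : 0 < η) (hη : η ≤ min (1 / (21 * δ * (K : ℝ))) (1 / β))
    (i : Fin N) (x xstar : EuclideanSpace ℝ (Fin d))
    (y : ℕ → EuclideanSpace ℝ (Fin d)) (hy0 : y 0 = x)
    (hrec : ∀ k, y (k + 1) = y k - η • ((A i) (y k - xstar) + (Abar - A i) (x - xstar))) :
    ∀ k, 1 ≤ k → k ≤ K →
      ‖y k - x‖ ^ 2 ≤ (1 + 1 / (2 * (K : ℝ))) * ‖y (k - 1) - x‖ ^ 2
        + 7 * (K : ℝ) * η ^ 2 * ‖Abar (y (k - 1) - xstar)‖ ^ 2 :=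
  scaffold_drift_bound_quadratic_general A Abar δ β hδ hdiss K hK η hη0 hη i x xstar y hrec
end
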